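/- If T is an A-bounded operator, then for all positive integers n, ω_A(Tⁿ) ≤ (ω_A(T))ⁿ (power inequality for the A-numerical radius). -/

import Mathlib

open Filter

variable {H : Type*} [NormedAddCommGroup H] [InnerProductSpace ℂ H] [CompleteSpace H]

/-- The seminorm induced by a positive operator `A`: `‖x‖_A = ⟨Ax,x⟩^{1/2}`. -/
noncomputable def anorm (A : H →L[ℂ] H) (x : H) : ℝ :=
  Real.sqrt ((inner ℂ (A x) x : ℂ).re)

/-- `T` is `A`-bounded: there is `c > 0` with `‖Tx‖_A ≤ c‖x‖_A` for all `x`. -/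
def ABounded (A T : H →L[ℂ] H) : Prop :=
  ∃ c > 0, ∀ x : H, anorm A (T x) ≤ c * anorm A x

/-- The `A`-operator seminorm `‖T‖_A = sup{‖Tx‖_A : ‖x‖_A = 1}`. -/
noncomputable def opAnorm (A T : H →L[ℂ] H) : ℝ :=
  sSup {c : ℝ | ∃ x : H, anorm A x = 1 ∧ c = anorm A (T x)}

/-- The `A`-spectral radius `r_A(T) = inf_{n ≥ 1} ‖Tⁿ‖_A^{1/n}`. -/
noncomputable def rA (A T : H →L[ℂ] H) : ℝ :=
  ⨅ n : ℕ+, opAnorm A (T ^ (n : ℕ)) ^ (((n : ℕ) : ℝ)⁻¹)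

/-- The `A`-numerical radius `ω_A(T) = sup{|⟨Tx,x⟩_A| : ‖x‖_A = 1}`. -/
noncomputable def wA (A T : H →L[ℂ] H) : ℝ :=
  sSup {c : ℝ | ∃ x : H, anorm A x = 1 ∧ c = ‖(inner ℂ (A (T x)) x : ℂ)‖}

/-!
Writing `⟨Ax, y⟩ = ⟨A^{1/2} x, A^{1/2} y⟩` turns `‖·‖_A` into an honest seminorm with
Cauchy–Schwarz. The power inequality then follows Pearcy's proof of Berger's theorem. If
`|a| ω_A(T) ≤ 1` then `Re ⟨(1 - aT) y, y⟩_A ≥ 0`. For a primitive `n`-th root of unity `ζ`,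
`1 - zⁿTⁿ = (1 - ζʲzT) pⱼ(T)` with `pⱼ(T) = ∑_{m<n} (ζʲzT)ᵐ`, and `∑ⱼ pⱼ(T) = n`; hence, with
`yⱼ = pⱼ(T) x`, `n Re ⟨(1 - zⁿTⁿ) x, x⟩_A = ∑ⱼ Re ⟨(1 - ζʲzT) yⱼ, yⱼ⟩_A ≥ 0` whenever
`|z| ω_A(T) ≤ 1`. Taking `|z| = 1/ω` for `ω > ω_A(T)` and the phase of `z` so that
`z̄ⁿ ⟨Tⁿx, x⟩_A ≥ 0` gives `|⟨Tⁿx, x⟩_A| ≤ ωⁿ` for `‖x‖_A = 1`; let `ω ↓ ω_A(T)`.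
-/

open Finset ComplexConjugate Topology

section GeomSumRootsOfUnity

variable {R B : Type*} [CommRing R] [Ring B] [Algebra R B]

lemma one_sub_smul_mul_geom_sum_of_pow_eq_one {ζ : R} {n : ℕ} (hζ : ζ ^ n = 1) (j : ℕ) (z : R)
    (T : B) :
    (1 - (ζ ^ j * z) • T) * ∑ m ∈ range n, ((ζ ^ j * z) • T) ^ m = 1 - z ^ n • T ^ n := by
  rw [mul_neg_geom_sum, smul_pow, mul_pow, ← pow_mul, mul_comm j, pow_mul, hζ, one_pow, one_mul]

lemma geom_sum_pow_eq_zero_of_pow_eq_one [IsDomain R] {x : R} {n : ℕ} (hx : x ^ n = 1)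
    (hx1 : x ≠ 1) : ∑ j ∈ range n, x ^ j = 0 := by
  have h := mul_neg_geom_sum x n
  rw [hx, sub_self] at h
  exact (mul_eq_zero.mp h).resolve_left (sub_ne_zero.mpr hx1.symm)

-- Orthogonality of the characters `j ↦ ζ ^ (j * m)` kills every `T ^ m` with `0 < m < n`.
lemma IsPrimitiveRoot.sum_geom_sum_smul [IsDomain R] {ζ : R} {n : ℕ} (hζ : IsPrimitiveRoot ζ n)
    (z : R) (T : B) :
    ∑ j ∈ range n, ∑ m ∈ range n, ((ζ ^ j * z) • T) ^ m = n := by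
  have hpow (m : ℕ) : ∑ j ∈ range n, ((ζ ^ j * z) • T) ^ m
      = ((∑ j ∈ range n, (ζ ^ m) ^ j) * z ^ m) • T ^ m := by
    rw [sum_mul, sum_smul]
    refine sum_congr rfl fun j _ => ?_
    rw [smul_pow, mul_pow, ← pow_mul, ← pow_mul, mul_comm j m]
  rw [sum_comm, sum_congr rfl fun m _ => hpow m]
  rcases n.eq_zero_or_pos with rfl | hn
  · simp
  rw [sum_eq_single_of_mem 0 (mem_range.mpr hn)]
  · simp [Nat.cast_smul_eq_nsmul]
  · intro m hm hm0
    rw [geom_sum_pow_eq_zero_of_pow_eq_one (by rw [← pow_mul, mul_comm, pow_mul, hζ.pow_eq_one,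
      one_pow]) (hζ.pow_ne_one_of_pos_of_lt hm0 (mem_range.mp hm)), zero_mul, zero_smul]

end GeomSumRootsOfUnity

lemma Complex.exists_norm_eq_one_pow_mul_eq_norm (w : ℂ) {n : ℕ} (hn : n ≠ 0) :
    ∃ v : ℂ, ‖v‖ = 1 ∧ v ^ n * w = ‖w‖ := by
  refine ⟨exp (↑(-(w.arg / n)) * I), norm_exp_ofReal_mul_I _, ?_⟩
  have hphase : (n : ℂ) * (↑(-(w.arg / n)) * I) + w.arg * I = 0 := by
    push_cast
    field_simp
    ring
  calc exp (↑(-(w.arg / n)) * I) ^ n * w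
      = exp (↑(-(w.arg / n)) * I) ^ n * (‖w‖ * exp (w.arg * I)) := by
        rw [norm_mul_exp_arg_mul_I]
    _ = ‖w‖ * exp (n * (↑(-(w.arg / n)) * I) + w.arg * I) := by
        rw [← exp_nat_mul, mul_left_comm, exp_add]
    _ = ‖w‖ := by rw [hphase, exp_zero, mul_one]

section SemiInner

variable {A : H →L[ℂ] H}

lemma inner_apply_eq_inner_sqrt (hA : A.IsPositive) (x y : H) :
    inner ℂ (A x) y = inner ℂ (CFC.sqrt A x) (CFC.sqrt A y) := by
  have hA' : 0 ≤ A := (ContinuousLinearMap.nonneg_iff_isPositive A).mpr hA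
  conv_lhs => rw [← CFC.sqrt_mul_sqrt_self A hA', mul_apply_eq_comp]
  rw [← ContinuousLinearMap.adjoint_inner_right, (CFC.sqrt_nonneg A).isSelfAdjoint.adjoint_eq]

omit [CompleteSpace H] in
lemma anorm_nonneg (A : H →L[ℂ] H) (x : H) : 0 ≤ anorm A x := Real.sqrt_nonneg _

lemma anorm_eq_norm_sqrt (hA : A.IsPositive) (x : H) : anorm A x = ‖CFC.sqrt A x‖ := by
  rw [anorm, inner_apply_eq_inner_sqrt hA, inner_self_eq_norm_sq_to_K]
  norm_cast
  exact Real.sqrt_sq (norm_nonneg _)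

omit [CompleteSpace H] in
lemma re_inner_self_eq_anorm_sq (hA : A.IsPositive) (x : H) :
    (inner ℂ (A x) x).re = anorm A x ^ 2 := by
  rw [anorm, Real.sq_sqrt]
  exact hA.re_inner_nonneg_left x

lemma anorm_smul (hA : A.IsPositive) (c : ℂ) (x : H) : anorm A (c • x) = ‖c‖ * anorm A x := by
  simp only [anorm_eq_norm_sqrt hA, map_smul, norm_smul]

lemma norm_inner_le_anorm_mul_anorm (hA : A.IsPositive) (x y : H) :
    ‖inner ℂ (A x) y‖ ≤ anorm A x * anorm A y := by
  rw [inner_apply_eq_inner_sqrt hA, anorm_eq_norm_sqrt hA, anorm_eq_norm_sqrt hA]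
  exact norm_inner_le_norm _ _

end SemiInner

section NumericalRadius

variable {A T : H →L[ℂ] H}

omit [CompleteSpace H] in
lemma wA_nonneg (A T : H →L[ℂ] H) : 0 ≤ wA A T :=
  Real.sSup_nonneg <| by rintro _ ⟨x, -, rfl⟩; exact norm_nonneg _

lemma ABounded.bddAbove_numericalRange (hA : A.IsPositive) (hT : ABounded A T) :
    BddAbove {c : ℝ | ∃ x : H, anorm A x = 1 ∧ c = ‖(inner ℂ (A (T x)) x : ℂ)‖} := by
  obtain ⟨c, -, hc⟩ := hT
  refine ⟨c, ?_⟩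
  rintro _ ⟨x, hx, rfl⟩
  calc ‖inner ℂ (A (T x)) x‖ ≤ anorm A (T x) * anorm A x := norm_inner_le_anorm_mul_anorm hA _ _
    _ ≤ c * anorm A x * anorm A x := mul_le_mul_of_nonneg_right (hc x) (anorm_nonneg A x)
    _ = c := by rw [hx, mul_one, mul_one]

lemma norm_inner_le_wA_mul_anorm_sq (hA : A.IsPositive) (hT : ABounded A T) (x : H) :
    ‖inner ℂ (A (T x)) x‖ ≤ wA A T * anorm A x ^ 2 := by
  rcases (anorm_nonneg A x).eq_or_lt with hx | hx
  · have h := norm_inner_le_anorm_mul_anorm hA (T x) x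
    rw [← hx, mul_zero] at h
    rw [← hx]
    simpa using h
  set u : H := ((anorm A x)⁻¹ : ℂ) • x
  have hu : anorm A u = 1 := by
    rw [anorm_smul hA, norm_inv, Complex.norm_real, Real.norm_of_nonneg hx.le,
      inv_mul_cancel₀ hx.ne']
  have hinner : inner ℂ (A (T u)) u = ((anorm A x ^ 2)⁻¹ : ℝ) * inner ℂ (A (T x)) x := by
    simp only [u, map_smul, inner_smul_left, inner_smul_right, map_inv₀, Complex.conj_ofReal,
      ← mul_assoc]
    push_cast
    ring
  have hle : ‖inner ℂ (A (T u)) u‖ ≤ wA A T :=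
    le_csSup (hT.bddAbove_numericalRange hA) ⟨u, hu, rfl⟩
  rw [hinner, norm_mul, Complex.norm_real, Real.norm_of_nonneg (by positivity),
    inv_mul_le_iff₀ (by positivity)] at hle
  linarith

lemma re_inner_one_sub_smul_nonneg (hA : A.IsPositive) (hT : ABounded A T) {a : ℂ}
    (ha : ‖a‖ * wA A T ≤ 1) (y : H) : 0 ≤ (inner ℂ (A ((1 - a • T) y)) y).re := by
  have hexpand : inner ℂ (A ((1 - a • T) y)) y
      = inner ℂ (A y) y - conj a * inner ℂ (A (T y)) y := by
    simp only [sub_apply, one_apply_eq_self, smul_apply, map_sub, map_smul, inner_sub_left,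
      inner_smul_left]
  have hbound : (conj a * inner ℂ (A (T y)) y).re ≤ anorm A y ^ 2 :=
    calc (conj a * inner ℂ (A (T y)) y).re ≤ ‖a‖ * ‖inner ℂ (A (T y)) y‖ :=
          (Complex.re_le_norm _).trans_eq (by rw [norm_mul, Complex.norm_conj])
      _ ≤ ‖a‖ * (wA A T * anorm A y ^ 2) := by
          gcongr; exact norm_inner_le_wA_mul_anorm_sq hA hT y
      _ ≤ anorm A y ^ 2 := by
          rw [← mul_assoc]; exact mul_le_of_le_one_left (sq_nonneg _) ha
  rw [hexpand, Complex.sub_re, re_inner_self_eq_anorm_sq hA]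
  linarith

lemma re_inner_one_sub_pow_smul_nonneg (hA : A.IsPositive) (hT : ABounded A T) {n : ℕ}
    (hn : 0 < n) {z : ℂ} (hz : ‖z‖ * wA A T ≤ 1) (x : H) :
    0 ≤ (inner ℂ (A ((1 - z ^ n • T ^ n) x)) x).re := by
  set ζ := Complex.exp (2 * Real.pi * Complex.I / n)
  have hζ : IsPrimitiveRoot ζ n := Complex.isPrimitiveRoot_exp n hn.ne'
  set p : ℕ → H →L[ℂ] H := fun j => ∑ m ∈ range n, ((ζ ^ j * z) • T) ^ m
  have hterm (j : ℕ) : 0 ≤ (inner ℂ (A ((1 - z ^ n • T ^ n) x)) (p j x)).re := by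
    rw [← one_sub_smul_mul_geom_sum_of_pow_eq_one hζ.pow_eq_one j z T, mul_apply_eq_comp]
    refine re_inner_one_sub_smul_nonneg hA hT ?_ _
    rwa [norm_mul, norm_pow, hζ.norm'_eq_one hn.ne', one_pow, one_mul]
  have hsum : ∑ j ∈ range n, p j x = (n : ℂ) • x := by
    rw [← _root_.sum_apply, hζ.sum_geom_sum_smul z T, natCast_apply, Nat.cast_smul_eq_nsmul]
  have hn' : (0 : ℝ) < n := Nat.cast_pos.mpr hn
  have htotal : 0 ≤ n * (inner ℂ (A ((1 - z ^ n • T ^ n) x)) x).re := by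
    calc 0 ≤ ∑ j ∈ range n, (inner ℂ (A ((1 - z ^ n • T ^ n) x)) (p j x)).re :=
          sum_nonneg fun j _ => hterm j
      _ = n * (inner ℂ (A ((1 - z ^ n • T ^ n) x)) x).re := by
          rw [← Complex.re_sum, ← inner_sum, hsum, inner_smul_right, ← Complex.ofReal_natCast,
            Complex.re_ofReal_mul]
  exact nonneg_of_mul_nonneg_right htotal hn'

lemma norm_inner_pow_le_of_wA_le (hA : A.IsPositive) (hT : ABounded A T) {n : ℕ} (hn : 0 < n)
    {ω : ℝ} (hω : 0 < ω) (hTω : wA A T ≤ ω) {x : H} (hx : anorm A x = 1) :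
    ‖inner ℂ (A ((T ^ n) x)) x‖ ≤ ω ^ n := by
  set w := inner ℂ (A ((T ^ n) x)) x
  obtain ⟨v, hv, hvw⟩ := Complex.exists_norm_eq_one_pow_mul_eq_norm w hn.ne'
  set z : ℂ := (ω⁻¹ : ℝ) * conj v
  have hz : ‖z‖ * wA A T ≤ 1 := by
    rw [norm_mul, Complex.norm_real, Complex.norm_conj, hv, mul_one,
      Real.norm_of_nonneg (inv_nonneg.mpr hω.le)]
    exact inv_mul_le_one_of_le₀ hTω hω.le
  have hexpand : inner ℂ (A ((1 - z ^ n • T ^ n) x)) x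
      = inner ℂ (A x) x - ((ω ^ n)⁻¹ * ‖w‖ : ℝ) := by
    simp only [sub_apply, one_apply_eq_self, smul_apply, map_sub, map_smul, inner_sub_left,
      inner_smul_left]
    rw [mul_pow, map_mul, map_pow, map_pow, Complex.conj_conj, Complex.conj_ofReal, mul_assoc, hvw]
    push_cast
    ring
  have h := re_inner_one_sub_pow_smul_nonneg hA hT hn hz x
  rwa [hexpand, Complex.sub_re, Complex.ofReal_re, re_inner_self_eq_anorm_sq hA, hx, one_pow,
    sub_nonneg, inv_mul_le_iff₀ (by positivity), mul_one] at h

lemma wA_pow_le_of_lt (hA : A.IsPositive) (hT : ABounded A T) {n : ℕ} (hn : 0 < n) {ω : ℝ}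
    (hω : wA A T < ω) : wA A (T ^ n) ≤ ω ^ n := by
  have hω0 : 0 < ω := (wA_nonneg A T).trans_lt hω
  refine Real.sSup_le ?_ (pow_nonneg hω0.le n)
  rintro _ ⟨x, hx, rfl⟩
  exact norm_inner_pow_le_of_wA_le hA hT hn hω0 hω.le hx

end NumericalRadius

theorem stmt_12_general (A T : H →L[ℂ] H) (hA : A.IsPositive)
    (hT : ABounded A T) :
    ∀ n : ℕ, 0 < n → wA A (T ^ n) ≤ (wA A T) ^ n := by
  intro n hn
  have hcont : Tendsto (fun ω : ℝ => ω ^ n) (𝓝[>] wA A T) (𝓝 (wA A T ^ n)) :=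
    ((continuous_pow n).tendsto _).mono_left nhdsWithin_le_nhds
  exact ge_of_tendsto hcont
    (eventually_nhdsWithin_of_forall fun ω hω => wA_pow_le_of_lt hA hT hn hω)

theorem stmt_12 (A T : H →L[ℂ] H) (hA : A.IsPositive) (hA0 : A ≠ 0)
    (hT : ABounded A T) :
    ∀ n : ℕ, 0 < n → wA A (T ^ n) ≤ (wA A T) ^ n :=
  stmt_12_general A T hA hT
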